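/- arXiv:1905.11255 — 2 statements merged into one kernel-verified Lean document; each statement's English description precedes it below -/
import Mathlib

section
/- Let C, Ĉ be positive self-adjoint bounded operators on a Hilbert space H, α > 0, and μ, μ̂ ∈ H. Define u_α = (C + αI)⁻¹ μ and û = (Ĉ + αI)⁻¹ μ̂. If ‖Ĉ − C‖ ≤ ε₂ and ‖μ̂ − μ‖ ≤ ε₁, then ‖û − u_α‖ ≤ (ε₂/α²)·(‖μ‖ + ε₁) + ε₁/α. -/
open RealInnerProductSpace

lemma tikhonov_resolvent_bound
    {H : Type*} [NormedAddCommGroup H] [InnerProductSpace ℝ H]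
    (C : H →L[ℝ] H) (hpos : ∀ f : H, 0 ≤ ⟪C f, f⟫)
    (α : ℝ) (hα : 0 < α) (T : H →L[ℝ] H)
    (hT₁ : (C + α • ContinuousLinearMap.id ℝ H).comp T = ContinuousLinearMap.id ℝ H)
    (x : H) : ‖T x‖ ≤ ‖x‖ / α := by
  have hx : C (T x) + α • T x = x := by
    have := congrFun (congrArg DFunLike.coe hT₁) x
    simpa using this
  have h1 : α * ‖T x‖ ^ 2 ≤ ⟪x, T x⟫ := by
    have h0 : ⟪C (T x) + α • T x, T x⟫ = ⟪C (T x), T x⟫ + α * ⟪T x, T x⟫ := by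
      rw [inner_add_left, real_inner_smul_left]
    rw [hx] at h0
    rw [h0, real_inner_self_eq_norm_sq]
    nlinarith [hpos (T x)]
  have h2 : ⟪x, T x⟫ ≤ ‖x‖ * ‖T x‖ := real_inner_le_norm x (T x)
  rcases eq_or_lt_of_le (norm_nonneg (T x)) with h | h
  · rw [← h]; positivity
  · rw [le_div_iff₀ hα]
    nlinarith

/-- Bound on the distance between the Tikhonov-regularized solutions
`u_α = (C + αI)⁻¹ μ` and `û = (Ĉ + αI)⁻¹ μ̂`: if `‖Ĉ − C‖ ≤ ε₂` and `‖μ̂ − μ‖ ≤ ε₁`,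
then `‖û − u_α‖ ≤ (ε₂/α²)(‖μ‖ + ε₁) + ε₁/α`. -/
theorem tikhonov_solution_perturbation_bound
    {H : Type*} [NormedAddCommGroup H] [InnerProductSpace ℝ H] [CompleteSpace H]
    (C Chat : H →L[ℝ] H)
    (hsaC : IsSelfAdjoint C) (hposC : ∀ f : H, 0 ≤ ⟪C f, f⟫)
    (hsaChat : IsSelfAdjoint Chat) (hposChat : ∀ f : H, 0 ≤ ⟪Chat f, f⟫)
    (α : ℝ) (hα : 0 < α)
    (T That : H →L[ℝ] H)
    (hT₁ : (C + α • ContinuousLinearMap.id ℝ H).comp T = ContinuousLinearMap.id ℝ H)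
    (hT₂ : T.comp (C + α • ContinuousLinearMap.id ℝ H) = ContinuousLinearMap.id ℝ H)
    (hThat₁ : (Chat + α • ContinuousLinearMap.id ℝ H).comp That = ContinuousLinearMap.id ℝ H)
    (hThat₂ : That.comp (Chat + α • ContinuousLinearMap.id ℝ H) = ContinuousLinearMap.id ℝ H)
    (μ μhat : H) (ε₁ ε₂ : ℝ)
    (hε₂ : ‖Chat - C‖ ≤ ε₂) (hε₁ : ‖μhat - μ‖ ≤ ε₁) :
    ‖That μhat - T μ‖ ≤ (ε₂ / α ^ 2) * (‖μ‖ + ε₁) + ε₁ / α := by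
  have hTb := tikhonov_resolvent_bound C hposC α hα T hT₁
  have hThatb := tikhonov_resolvent_bound Chat hposChat α hα That hThat₁
  have hε₂0 : 0 ≤ ε₂ := le_trans (norm_nonneg _) hε₂
  have hε₁0 : 0 ≤ ε₁ := le_trans (norm_nonneg _) hε₁
  -- key identity: That μ - T μ = That ((C - Chat) (T μ))
  have hμid : (C + α • ContinuousLinearMap.id ℝ H) (T μ) = μ := by
    have := congrFun (congrArg DFunLike.coe hT₁) μ; simpa using this
  have hTμ : T μ = That ((Chat + α • ContinuousLinearMap.id ℝ H) (T μ)) := by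
    have := congrFun (congrArg DFunLike.coe hThat₂) (T μ); simpa using this.symm
  have hop : That - T = That.comp ((C - Chat).comp T) := by
    calc That - T
        = That.comp ((C + α • ContinuousLinearMap.id ℝ H).comp T)
          - (That.comp (Chat + α • ContinuousLinearMap.id ℝ H)).comp T := by
          rw [hT₁, hThat₂]; simp
      _ = That.comp ((C - Chat).comp T) := by
          ext x
          simp only [ContinuousLinearMap.comp_apply, ContinuousLinearMap.sub_apply,
            ContinuousLinearMap.add_apply, ContinuousLinearMap.smul_apply,
            ContinuousLinearMap.id_apply]
          rw [← map_sub]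
          congr 1
          abel
  have hkey : That μ - T μ = That ((C - Chat) (T μ)) := by
    have := congrFun (congrArg DFunLike.coe hop) μ
    simpa using this
  have hsplit : That μhat - T μ = That (μhat - μ) + (That μ - T μ) := by
    rw [map_sub]; abel
  have h1 : ‖That (μhat - μ)‖ ≤ ε₁ / α := by
    calc ‖That (μhat - μ)‖ ≤ ‖μhat - μ‖ / α := hThatb _
      _ ≤ ε₁ / α := by gcongr
  have h2 : ‖That μ - T μ‖ ≤ ε₂ / α ^ 2 * ‖μ‖ := by
    rw [hkey]
    calc ‖That ((C - Chat) (T μ))‖ ≤ ‖(C - Chat) (T μ)‖ / α := hThatb _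
      _ ≤ ‖C - Chat‖ * ‖T μ‖ / α := by gcongr; exact (C - Chat).le_opNorm _
      _ ≤ ε₂ * (‖μ‖ / α) / α := by
          gcongr
          · rw [norm_sub_rev]; exact hε₂
          · exact hTb μ
      _ = ε₂ / α ^ 2 * ‖μ‖ := by ring
  calc ‖That μhat - T μ‖ ≤ ‖That (μhat - μ)‖ + ‖That μ - T μ‖ := by
        rw [hsplit]; exact norm_add_le _ _
    _ ≤ ε₁ / α + ε₂ / α ^ 2 * ‖μ‖ := add_le_add h1 h2
    _ ≤ ε₂ / α ^ 2 * (‖μ‖ + ε₁) + ε₁ / α := by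
        have hp : 0 ≤ ε₂ / α ^ 2 * ε₁ := by positivity
        nlinarith [hp]
end

section
/- Let H be an RKHS with bounded kernel, sup_x ‖φ(x)‖_H = c < ∞, and ν a probability measure with covariance operator C_ν. Let Ĉ = M⁻¹ Σ_{i=1}^M φ(x_i) ⊗ φ(x_i) for i.i.d. samples x_i ∼ ν. Then for every ε > 0, the probability that ‖C_ν − Ĉ‖_HS ≤ ε (Hilbert–Schmidt norm) is at least 1 − 2 exp(−M ε² / (8 c⁴)). -/
/-!
Hilbert-space Hoeffding inequality in the form of Pinelis. For `‖Ψ‖ ≤ b` and the centred sums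
`S_n = ∑ (Ψ(y_i) - E Ψ)` one shows `E cosh ‖S_n‖ ≤ cosh (2b) ^ n`. Conditioning on the first
`n` samples, this needs `E cosh ‖u + Ψ x - E Ψ‖ ≤ cosh ‖u‖ cosh (2b)` for each fixed `u`:
Jensen's inequality against an independent copy `x'` bounds the left side by
`E cosh ‖u + Ψ x - Ψ x'‖`, which is invariant under swapping `x` and `x'`, and the two-point
inequality `cosh ‖u + v‖ + cosh ‖u - v‖ ≤ 2 cosh ‖u‖ cosh ‖v‖` finishes. That inequality comes
from the parallelogram law together with convexity of `t ↦ cosh √t`, a power series with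
nonnegative coefficients. Applied to `l • Ψ`, Markov's inequality gives
`P(‖S_n‖ ≥ r) ≤ 2 exp (2 n l² b² - l r)`; optimising in `l` and taking `b = c²` yields the bound.
-/

open MeasureTheory ProbabilityTheory
open Real Set

theorem ConvexOn.of_hasSum {E : Type*} [AddCommMonoid E] [Module ℝ E] {s : Set E}
    {f : ℕ → E → ℝ} {F : E → ℝ} (hs : Convex ℝ s) (hf : ∀ n, ConvexOn ℝ s (f n))
    (hF : ∀ x ∈ s, HasSum (fun n ↦ f n x) (F x)) : ConvexOn ℝ s F :=
  ⟨hs, fun x hx y hy a b ha hb hab ↦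
    hasSum_le (fun n ↦ (hf n).2 hx hy ha hb hab) (hF _ (hs hx hy ha hb hab))
      (((hF x hx).mul_left a).add ((hF y hy).mul_left b))⟩

theorem Real.convexOn_cosh_sqrt : ConvexOn ℝ (Ici 0) fun t ↦ cosh √t := by
  refine .of_hasSum (convex_Ici 0) (f := fun n t ↦ ((2 * n).factorial : ℝ)⁻¹ • t ^ n)
    (fun n ↦ (convexOn_pow n).smul (by positivity)) fun t ht ↦ ?_
  convert hasSum_cosh √t using 2 with n
  rw [pow_mul, sq_sqrt ht, smul_eq_mul, inv_mul_eq_div]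

theorem convexOn_cosh_norm {E : Type*} [SeminormedAddCommGroup E] [NormedSpace ℝ E] :
    ConvexOn ℝ univ fun z : E ↦ cosh ‖z‖ :=
  .of_hasSum convex_univ (f := fun n z ↦ ((2 * n).factorial : ℝ)⁻¹ • ‖z‖ ^ (2 * n))
    (fun n ↦ (convexOn_univ_norm.pow (fun _ _ ↦ norm_nonneg _) _).smul (by positivity))
    fun z _ ↦ by simpa only [smul_eq_mul, inv_mul_eq_div] using hasSum_cosh ‖z‖

theorem ConvexOn.map_add_map_le {s : Set ℝ} {g : ℝ → ℝ} (hg : ConvexOn ℝ s g)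
    {x y x' y' : ℝ} (hx' : x' ∈ s) (hy' : y' ∈ s) (hxx' : x' ≤ x) (hyx' : x' ≤ y)
    (hsum : x + y = x' + y') : g x + g y ≤ g x' + g y' := by
  rcases hxx'.eq_or_lt with rfl | hlt
  · obtain rfl : y = y' := by linarith
    rfl
  have hd : 0 < y' - x' := by linarith
  set θ := (y' - x) / (y' - x')
  have hθd : θ * (y' - x') = y' - x := div_mul_cancel₀ _ hd.ne'
  have hθ0 : 0 ≤ θ := div_nonneg (by linarith) hd.le
  have hθ1 : 0 ≤ 1 - θ := sub_nonneg.2 <| (div_le_one hd).2 (by linarith)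
  have hx := hg.2 hx' hy' hθ0 hθ1 (by ring)
  have hy := hg.2 hx' hy' hθ1 hθ0 (by ring)
  rw [show θ • x' + (1 - θ) • y' = x by simp only [smul_eq_mul]; linear_combination -hθd]
    at hx
  rw [show (1 - θ) • x' + θ • y' = y by simp only [smul_eq_mul]; linear_combination hθd - hsum]
    at hy
  simp only [smul_eq_mul] at hx hy
  linarith

theorem cosh_norm_add_add_cosh_norm_sub_le {E : Type*} [NormedAddCommGroup E]
    [InnerProductSpace ℝ E] (u v : E) :
    cosh ‖u + v‖ + cosh ‖u - v‖ ≤ 2 * cosh ‖u‖ * cosh ‖v‖ := by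
  have hcosh (t : ℝ) : cosh √(t ^ 2) = cosh t := by rw [sqrt_sq_eq_abs, cosh_abs]
  have hlow (w : E) (hw : |‖u‖ - ‖v‖| ≤ ‖w‖) : (‖u‖ - ‖v‖) ^ 2 ≤ ‖w‖ ^ 2 :=
    sq_le_sq' (neg_le_of_abs_le hw) (le_of_abs_le hw)
  have key := convexOn_cosh_sqrt.map_add_map_le (sq_nonneg (‖u‖ - ‖v‖))
    (sq_nonneg (‖u‖ + ‖v‖)) (hlow _ (by simpa using abs_norm_sub_norm_le u (-v)))
    (hlow _ (abs_norm_sub_norm_le u v))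
    (by linear_combination parallelogram_law_with_norm ℝ u v)
  simp only [hcosh] at key
  linarith [cosh_add ‖u‖ ‖v‖, cosh_sub ‖u‖ ‖v‖]

theorem Real.cosh_pow_div_cosh_le (n : ℕ) (a s : ℝ) :
    cosh a ^ n / cosh s ≤ 2 * exp (n * a ^ 2 / 2 - s) := by
  have hnum : cosh a ^ n ≤ exp (n * a ^ 2 / 2) := by
    calc cosh a ^ n ≤ exp (a ^ 2 / 2) ^ n := by gcongr; exact cosh_le_exp_half_sq a
      _ = exp (n * a ^ 2 / 2) := by rw [← exp_nat_mul, mul_div_assoc]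
  have hden : exp s / 2 ≤ cosh s := by rw [cosh_eq]; linarith [exp_pos (-s)]
  rw [div_le_iff₀ (cosh_pos s), exp_sub]
  calc cosh a ^ n ≤ 2 * (exp (n * a ^ 2 / 2) / exp s) * (exp s / 2) := by field_simp; exact hnum
    _ ≤ 2 * (exp (n * a ^ 2 / 2) / exp s) * cosh s := by gcongr

theorem mul_le_norm_sum_sub_of_le_norm_sub_inv_smul_sum {E : Type*} [NormedAddCommGroup E]
    [NormedSpace ℝ E] {n : ℕ} (v : Fin n → E) (C : E) {ε : ℝ}
    (h : ε ≤ ‖C - (n : ℝ)⁻¹ • ∑ i, v i‖) : n * ε ≤ ‖∑ i, (v i - C)‖ := by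
  rcases n.eq_zero_or_pos with rfl | hn
  · simp
  have hsum : ∑ i, (v i - C) = -((n : ℝ) • (C - (n : ℝ)⁻¹ • ∑ i, v i)) := by
    rw [Finset.sum_sub_distrib, smul_sub, smul_inv_smul₀ (by positivity), Finset.sum_const,
      Finset.card_univ, Fintype.card_fin, ← Nat.cast_smul_eq_nsmul ℝ]
    abel
  rw [hsum, norm_neg, norm_smul, Real.norm_natCast]
  gcongr

theorem integrable_cosh_norm_of_norm_le {α E : Type*} [MeasurableSpace α] {μ : Measure α}
    [IsFiniteMeasure μ] [NormedAddCommGroup E] {F : α → E} (hF : AEStronglyMeasurable F μ)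
    {R : ℝ} (hR : ∀ a, ‖F a‖ ≤ R) : Integrable (fun a ↦ cosh ‖F a‖) μ := by
  refine .of_bound (continuous_cosh.comp_aestronglyMeasurable hF.norm) (cosh R)
    (ae_of_all _ fun a ↦ ?_)
  rw [norm_of_nonneg (cosh_pos _).le, cosh_le_cosh, abs_norm]
  exact (hR a).trans (le_abs_self R)

theorem MeasureTheory.AEStronglyMeasurable.exists_stronglyMeasurable_norm_le {α E : Type*}
    [MeasurableSpace α] {μ : Measure α} [NormedAddCommGroup E] {f : α → E}
    (hf : AEStronglyMeasurable f μ) {b : ℝ} (hb : ∀ᵐ x ∂μ, ‖f x‖ ≤ b) (hb₀ : 0 ≤ b) :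
    ∃ g : α → E, StronglyMeasurable g ∧ (∀ x, ‖g x‖ ≤ b) ∧ f =ᵐ[μ] g := by
  set s := {x | ‖hf.mk f x‖ ≤ b}
  have hs : MeasurableSet s :=
    measurableSet_le hf.stronglyMeasurable_mk.norm.measurable measurable_const
  refine ⟨s.indicator (hf.mk f), hf.stronglyMeasurable_mk.indicator hs, fun x ↦ ?_, ?_⟩
  · by_cases hx : x ∈ s
    · rw [indicator_of_mem hx]; exact hx
    · simpa [hx] using hb₀
  · filter_upwards [hf.ae_eq_mk, hb] with x hx hxb
    rw [indicator_of_mem (by simpa [s, ← hx] using hxb), hx]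

theorem norm_sum_sub_integral_le {X E : Type*} [MeasurableSpace X] [NormedAddCommGroup E]
    [NormedSpace ℝ E] {ν : Measure X} [IsProbabilityMeasure ν] {Ψ : X → E} {b : ℝ}
    (hb : ∀ x, ‖Ψ x‖ ≤ b) {n : ℕ} (y : Fin n → X) :
    ‖∑ i, (Ψ (y i) - ∫ z, Ψ z ∂ν)‖ ≤ n * (2 * b) := by
  have hC : ‖∫ z, Ψ z ∂ν‖ ≤ b := by
    simpa using norm_integral_le_of_norm_le_const (ae_of_all ν hb)
  refine (norm_sum_le_of_le _ fun i _ ↦ norm_sub_le_of_le (hb (y i)) hC).trans_eq ?_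
  rw [Finset.sum_const, Finset.card_univ, Fintype.card_fin, nsmul_eq_mul, two_mul]

section HilbertHoeffding

variable {X E : Type*} [MeasurableSpace X] [NormedAddCommGroup E] [InnerProductSpace ℝ E]
  [CompleteSpace E] {ν : Measure X} [IsProbabilityMeasure ν] {Ψ : X → E} {b : ℝ}

theorem integral_cosh_norm_add_sub_integral_le (hΨ : StronglyMeasurable Ψ)
    (hb : ∀ x, ‖Ψ x‖ ≤ b) (u : E) :
    ∫ x, cosh ‖u + (Ψ x - ∫ z, Ψ z ∂ν)‖ ∂ν ≤ cosh ‖u‖ * cosh (2 * b) := by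
  set C := ∫ z, Ψ z ∂ν
  have hΨi : Integrable Ψ ν := .of_bound hΨ.aestronglyMeasurable b (ae_of_all _ hb)
  have hC : ‖C‖ ≤ b := by simpa using norm_integral_le_of_norm_le_const (ae_of_all ν hb)
  set H : X × X → ℝ := fun p ↦ cosh ‖u + (Ψ p.1 - Ψ p.2)‖
  have hH : Integrable H (ν.prod ν) := integrable_cosh_norm_of_norm_le (by fun_prop)
    fun p ↦ norm_add_le_of_le le_rfl (norm_sub_le_of_le (hb p.1) (hb p.2))
  have hHs : Integrable (fun p ↦ H p.swap) (ν.prod ν) := hH.swap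
  have jensen : ∀ᵐ x ∂ν, cosh ‖u + (Ψ x - C)‖ ≤ ∫ x', H (x, x') ∂ν := by
    filter_upwards [hH.prod_right_ae] with x hx
    have hd : Integrable (fun x' ↦ Ψ x - Ψ x') ν := (integrable_const _).sub hΨi
    have hmean : ∫ x', u + (Ψ x - Ψ x') ∂ν = u + (Ψ x - C) := by
      rw [integral_add (integrable_const u) hd, integral_sub (integrable_const _) hΨi]
      simp [C]
    rw [← hmean]
    exact convexOn_cosh_norm.map_integral_le (f := fun x' ↦ u + (Ψ x - Ψ x'))
      (continuous_cosh.comp continuous_norm).continuousOn isClosed_univ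
      (ae_of_all _ fun _ ↦ mem_univ _) ((integrable_const u).add hd) hx
  have pair (p : X × X) : H p + H p.swap ≤ 2 * (cosh ‖u‖ * cosh (2 * b)) := by
    have hD : cosh ‖Ψ p.1 - Ψ p.2‖ ≤ cosh (2 * b) := by
      rw [cosh_le_cosh, abs_norm]
      exact (two_mul b ▸ norm_sub_le_of_le (hb p.1) (hb p.2)).trans (le_abs_self _)
    calc H p + H p.swap = cosh ‖u + (Ψ p.1 - Ψ p.2)‖ + cosh ‖u - (Ψ p.1 - Ψ p.2)‖ := by
          rw [sub_eq_add_neg u, neg_sub]; rfl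
      _ ≤ 2 * cosh ‖u‖ * cosh ‖Ψ p.1 - Ψ p.2‖ := cosh_norm_add_add_cosh_norm_sub_le _ _
      _ ≤ 2 * (cosh ‖u‖ * cosh (2 * b)) := by rw [mul_assoc]; gcongr
  calc ∫ x, cosh ‖u + (Ψ x - C)‖ ∂ν
      ≤ ∫ x, ∫ x', H (x, x') ∂ν ∂ν := integral_mono_ae
        (integrable_cosh_norm_of_norm_le (by fun_prop)
          fun x ↦ norm_add_le_of_le le_rfl (norm_sub_le_of_le (hb x) hC))
        hH.integral_prod_left jensen
    _ = ∫ p, (H p + H p.swap) / 2 ∂(ν.prod ν) := by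
        rw [← integral_prod H hH, integral_div, integral_add hH hHs, integral_prod_swap H]
        ring
    _ ≤ ∫ p, cosh ‖u‖ * cosh (2 * b) ∂(ν.prod ν) :=
        integral_mono ((hH.add hHs).div_const 2) (integrable_const _)
          fun p ↦ by linarith [pair p]
    _ = cosh ‖u‖ * cosh (2 * b) := by simp

theorem integral_cosh_norm_sum_sub_integral_le (hΨ : StronglyMeasurable Ψ)
    (hb : ∀ x, ‖Ψ x‖ ≤ b) (n : ℕ) :
    ∫ y, cosh ‖∑ i : Fin n, (Ψ (y i) - ∫ z, Ψ z ∂ν)‖ ∂(Measure.pi fun _ ↦ ν) ≤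
      cosh (2 * b) ^ n := by
  set C := ∫ z, Ψ z ∂ν
  have hC : ‖C‖ ≤ b := by simpa using norm_integral_le_of_norm_le_const (ae_of_all ν hb)
  induction n with
  | zero => simp
  | succ n ih =>
    set S : (Fin n → X) → E := fun z ↦ ∑ i, (Ψ (z i) - C)
    have hS : Integrable (fun z ↦ cosh ‖S z‖) (Measure.pi fun _ ↦ ν) :=
      integrable_cosh_norm_of_norm_le (by fun_prop) (norm_sum_sub_integral_le hb)
    have hG : Integrable (fun p : X × (Fin n → X) ↦ cosh ‖S p.2 + (Ψ p.1 - C)‖)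
        (ν.prod (Measure.pi fun _ ↦ ν)) :=
      integrable_cosh_norm_of_norm_le (R := n * (2 * b) + 2 * b) (by fun_prop) fun p ↦
        norm_add_le_of_le (norm_sum_sub_integral_le hb p.2)
          (two_mul b ▸ norm_sub_le_of_le (hb p.1) hC)
    have hsplit :=
      (measurePreserving_piFinSuccAbove (fun _ : Fin (n + 1) ↦ ν) (Fin.last n)).symm
    calc ∫ y, cosh ‖∑ i : Fin (n + 1), (Ψ (y i) - C)‖ ∂(Measure.pi fun _ ↦ ν)
        = ∫ p, cosh ‖S p.2 + (Ψ p.1 - C)‖ ∂(ν.prod (Measure.pi fun _ ↦ ν)) := by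
          rw [← hsplit.integral_comp']
          congr with p
          simp only [S, MeasurableEquiv.piFinSuccAbove_symm_apply, Fin.insertNthEquiv_apply,
            Fin.insertNth_last', Fin.sum_univ_castSucc, Fin.snoc_castSucc, Fin.snoc_last]
      _ = ∫ z, ∫ x, cosh ‖S z + (Ψ x - C)‖ ∂ν ∂(Measure.pi fun _ ↦ ν) :=
          integral_prod_symm _ hG
      _ ≤ ∫ z, cosh ‖S z‖ * cosh (2 * b) ∂(Measure.pi fun _ ↦ ν) :=
          integral_mono hG.integral_prod_right (hS.mul_const _)
            fun z ↦ integral_cosh_norm_add_sub_integral_le hΨ hb (S z)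
      _ = (∫ z, cosh ‖S z‖ ∂(Measure.pi fun _ ↦ ν)) * cosh (2 * b) := integral_mul_const _ _
      _ ≤ cosh (2 * b) ^ n * cosh (2 * b) := by gcongr
      _ = cosh (2 * b) ^ (n + 1) := (pow_succ _ _).symm

theorem measure_pi_le_norm_sum_sub_integral_le (hΨ : StronglyMeasurable Ψ)
    (hb : ∀ x, ‖Ψ x‖ ≤ b) (n : ℕ) {l r : ℝ} (hl : 0 ≤ l) (hr : 0 ≤ r) :
    (Measure.pi fun _ : Fin n ↦ ν) {y | r ≤ ‖∑ i, (Ψ (y i) - ∫ z, Ψ z ∂ν)‖} ≤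
      ENNReal.ofReal (2 * exp (n * (2 * (l * b)) ^ 2 / 2 - l * r)) := by
  set P := Measure.pi fun _ : Fin n ↦ ν
  set T : (Fin n → X) → E := fun y ↦ ∑ i, (l • Ψ (y i) - ∫ z, l • Ψ z ∂ν)
  have hT (y : Fin n → X) : ‖T y‖ = l * ‖∑ i, (Ψ (y i) - ∫ z, Ψ z ∂ν)‖ := by
    simp only [T, integral_smul, ← smul_sub, ← Finset.smul_sum, norm_smul, norm_of_nonneg hl]
  have hlb (x : X) : ‖l • Ψ x‖ ≤ l * b := by
    rw [norm_smul, norm_of_nonneg hl]; exact mul_le_mul_of_nonneg_left (hb x) hl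
  have hlΨ : StronglyMeasurable fun x ↦ l • Ψ x := hΨ.const_smul l
  have hmoment : ∫ y, cosh ‖T y‖ ∂P ≤ cosh (2 * (l * b)) ^ n :=
    integral_cosh_norm_sum_sub_integral_le hlΨ hlb n
  have hmarkov := mul_meas_ge_le_integral_of_nonneg (ae_of_all P fun y ↦ (cosh_pos _).le)
    (integrable_cosh_norm_of_norm_le (F := T)
      (by simp only [T]; fun_prop : StronglyMeasurable T).aestronglyMeasurable
      (norm_sum_sub_integral_le hlb)) (cosh (l * r))
  have hsub : {y | r ≤ ‖∑ i, (Ψ (y i) - ∫ z, Ψ z ∂ν)‖} ⊆ {y | cosh (l * r) ≤ cosh ‖T y‖} :=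
    fun y (hy : r ≤ _) ↦ show cosh (l * r) ≤ cosh ‖T y‖ by
      rw [hT, cosh_le_cosh, abs_of_nonneg (mul_nonneg hl hr), abs_of_nonneg (by positivity)]
      exact mul_le_mul_of_nonneg_left hy hl
  calc P {y | r ≤ ‖∑ i, (Ψ (y i) - ∫ z, Ψ z ∂ν)‖}
      ≤ P {y | cosh (l * r) ≤ cosh ‖T y‖} := measure_mono hsub
    _ = ENNReal.ofReal (P.real {y | cosh (l * r) ≤ cosh ‖T y‖}) :=
        (ofReal_measureReal (measure_ne_top _ _)).symm
    _ ≤ _ := by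
        refine ENNReal.ofReal_le_ofReal (le_trans ?_ (cosh_pow_div_cosh_le n _ _))
        rw [le_div_iff₀ (cosh_pos _), mul_comm]
        exact hmarkov.trans hmoment

theorem measure_pi_le_norm_integral_sub_inv_smul_sum_le {Φ : X → E}
    (hΦ : AEStronglyMeasurable Φ ν) (hb : ∀ᵐ x ∂ν, ‖Φ x‖ ≤ b) (n : ℕ) {ε : ℝ} (hε : 0 ≤ ε) :
    (Measure.pi fun _ : Fin n ↦ ν) {y | ε ≤ ‖(∫ z, Φ z ∂ν) - (n : ℝ)⁻¹ • ∑ i, Φ (y i)‖} ≤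
      ENNReal.ofReal (2 * exp (-(n * ε ^ 2) / (8 * b ^ 2))) := by
  obtain ⟨x₀, hx₀⟩ := hb.exists
  obtain ⟨Ψ, hΨ, hΨb, hΦΨ⟩ := hΦ.exists_stronglyMeasurable_norm_le hb ((norm_nonneg _).trans hx₀)
  have hcoord : ∀ᵐ y ∂(Measure.pi fun _ : Fin n ↦ ν), ∀ i, Φ (y i) = Ψ (y i) :=
    ae_all_iff.2 fun i ↦ (measurePreserving_eval _ i).quasiMeasurePreserving.ae_eq_comp hΦΨ
  -- `l = ε / (4 b²)` minimises the exponent `n (2 l b)² / 2 - l n ε`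
  have hexponent : n * (2 * (ε / (4 * b ^ 2) * b)) ^ 2 / 2 - ε / (4 * b ^ 2) * (n * ε) =
      -(n * ε ^ 2) / (8 * b ^ 2) := by
    rcases eq_or_ne b 0 with rfl | hb₀
    · simp
    · field_simp; ring
  calc (Measure.pi fun _ : Fin n ↦ ν) {y | ε ≤ ‖(∫ z, Φ z ∂ν) - (n : ℝ)⁻¹ • ∑ i, Φ (y i)‖}
      = (Measure.pi fun _ : Fin n ↦ ν)
          {y | ε ≤ ‖(∫ z, Ψ z ∂ν) - (n : ℝ)⁻¹ • ∑ i, Ψ (y i)‖} := by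
        refine measure_congr (Filter.eventuallyEq_set.2 ?_)
        filter_upwards [hcoord] with y hy
        simp [integral_congr_ae hΦΨ, hy]
    _ ≤ (Measure.pi fun _ : Fin n ↦ ν) {y | n * ε ≤ ‖∑ i, (Ψ (y i) - ∫ z, Ψ z ∂ν)‖} :=
        measure_mono fun y ↦ mul_le_norm_sum_sub_of_le_norm_sub_inv_smul_sum _ _
    _ ≤ _ := hexponent ▸ measure_pi_le_norm_sum_sub_integral_le hΨ hΨb n
        (by positivity) (by positivity)

end HilbertHoeffding

theorem ofReal_one_sub_le_of_measure_compl_le {α : Type*} [MeasurableSpace α] {μ : Measure α}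
    [IsProbabilityMeasure μ] {s : Set α} {p : ℝ} (hp : 0 ≤ p) (h : μ sᶜ ≤ ENNReal.ofReal p) :
    ENNReal.ofReal (1 - p) ≤ μ s := by
  rw [ENNReal.ofReal_sub _ hp, ENNReal.ofReal_one, tsub_le_iff_right, ← measure_univ (μ := μ)]
  exact (measure_univ_le_add_compl s).trans (add_le_add_right h _)

theorem covariance_operator_concentration_general
    {X : Type*} [MeasurableSpace X]
    {H : Type*} [NormedAddCommGroup H]
    {E : Type*} [NormedAddCommGroup E] [InnerProductSpace ℝ E] [CompleteSpace E]
    (φ : X → H) (Φ : X → E)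
    (hHS : ∀ x : X, ‖Φ x‖ = ‖φ x‖ ^ 2)
    (c : ℝ) (hc : ∀ x : X, ‖φ x‖ ≤ c)
    (ν : Measure X) [IsProbabilityMeasure ν]
    {Ω : Type*} [MeasurableSpace Ω] (μ : Measure Ω) [IsProbabilityMeasure μ]
    (M : ℕ)
    (x : Fin M → Ω → X) (hmeas : ∀ i, Measurable (x i))
    (hdist : ∀ i, Measure.map (x i) μ = ν)
    (hindep : iIndepFun x μ)
    (hint : Integrable Φ ν) (ε : ℝ) (hε : 0 < ε) :
    ENNReal.ofReal (1 - 2 * Real.exp (-(M * ε ^ 2) / (8 * c ^ 4))) ≤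
      μ {ω | ‖(∫ y, Φ y ∂ν) - (M : ℝ)⁻¹ • ∑ i, Φ (x i ω)‖ ≤ ε} := by
  have hΦb (y : X) : ‖Φ y‖ ≤ c ^ 2 := hHS y ▸ pow_le_pow_left₀ (norm_nonneg _) (hc y) 2
  have hsample : AEMeasurable (fun ω i ↦ x i ω) μ := (measurable_pi_lambda _ hmeas).aemeasurable
  have hlaw : μ.map (fun ω i ↦ x i ω) = Measure.pi fun _ ↦ ν := by
    simpa [hdist] using (iIndepFun_iff_map_fun_eq_pi_map fun i ↦ (hmeas i).aemeasurable).1 hindep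
  refine ofReal_one_sub_le_of_measure_compl_le (by positivity) ?_
  calc μ {ω | ‖(∫ y, Φ y ∂ν) - (M : ℝ)⁻¹ • ∑ i, Φ (x i ω)‖ ≤ ε}ᶜ
      ≤ μ ((fun ω i ↦ x i ω) ⁻¹' {y | ε ≤ ‖(∫ z, Φ z ∂ν) - (M : ℝ)⁻¹ • ∑ i, Φ (y i)‖}) :=
        measure_mono fun _ hω ↦ show ε ≤ _ from (not_le.1 (show ¬_ ≤ ε from hω)).le
    _ ≤ μ.map (fun ω i ↦ x i ω) {y | ε ≤ ‖(∫ z, Φ z ∂ν) - (M : ℝ)⁻¹ • ∑ i, Φ (y i)‖} :=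
        Measure.le_map_apply hsample _
    _ ≤ ENNReal.ofReal (2 * exp (-(M * ε ^ 2) / (8 * (c ^ 2) ^ 2))) :=
        hlaw ▸ measure_pi_le_norm_integral_sub_inv_smul_sum_le hint.aestronglyMeasurable
          (ae_of_all _ hΦb) M hε.le
    _ = ENNReal.ofReal (2 * exp (-(M * ε ^ 2) / (8 * c ^ 4))) := by ring_nf

/-- Hilbert-space Hoeffding bound for the empirical covariance operator. The rank-one
operators `φ(x) ⊗ φ(x)` are viewed as elements `Φ x` of the Hilbert space `E` of
Hilbert–Schmidt operators on `H`, with `‖Φ x‖_HS = ‖φ x‖² ≤ c²`. For i.i.d. samples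
`x_1, …, x_M ∼ ν`, the empirical covariance `Ĉ = M⁻¹ ∑ Φ(x_i)` satisfies
`P(‖C_ν − Ĉ‖_HS ≤ ε) ≥ 1 − 2 exp(−M ε²/(8c⁴))` for every `ε > 0`,
where `C_ν = ∫ Φ dν` is the covariance operator. -/
theorem covariance_operator_concentration
    {X : Type*} [MeasurableSpace X]
    {H : Type*} [NormedAddCommGroup H] [InnerProductSpace ℝ H] [CompleteSpace H]
    {E : Type*} [NormedAddCommGroup E] [InnerProductSpace ℝ E] [CompleteSpace E]
    [MeasurableSpace E] [BorelSpace E]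
    (φ : X → H) (Φ : X → E) (hΦmeas : Measurable Φ)
    (hHS : ∀ x : X, ‖Φ x‖ = ‖φ x‖ ^ 2)
    (c : ℝ) (hc : ∀ x : X, ‖φ x‖ ≤ c)
    (ν : Measure X) [IsProbabilityMeasure ν]
    {Ω : Type*} [MeasurableSpace Ω] (μ : Measure Ω) [IsProbabilityMeasure μ]
    (M : ℕ) (hM : 0 < M)
    (x : Fin M → Ω → X) (hmeas : ∀ i, Measurable (x i))
    (hdist : ∀ i, Measure.map (x i) μ = ν)
    (hindep : iIndepFun x μ)
    (hint : Integrable Φ ν) (ε : ℝ) (hε : 0 < ε) :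
    ENNReal.ofReal (1 - 2 * Real.exp (-(M * ε ^ 2) / (8 * c ^ 4))) ≤
      μ {ω | ‖(∫ y, Φ y ∂ν) - (M : ℝ)⁻¹ • ∑ i, Φ (x i ω)‖ ≤ ε} :=
  covariance_operator_concentration_general φ Φ hHS c hc ν μ M x hmeas hdist hindep hint ε hε
end
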